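/- arXiv:1409.6646 — 2 statements merged into one kernel-verified Lean document; each statement's English description precedes it below -/
import Mathlib

section
/- If g is a continuous function on [0,∞) with g(0)=1 satisfying g(s) = (1/s)∫_0^s g(s')² ds' for all s > 0, and g is the square root of a Laplace transform of a probability density (hence 0 ≤ g ≤ 1), then g(s) = 1/(1+Cs) for some constant C ≥ 0. -/
open Set

/-!
Let `G s = ∫₀ˢ g² = s g(s)`. By the fundamental theorem of calculus `G' = g² = (G / s)²`, and `G > 0`
on `(0, ∞)` because `g(0) = 1`. This Riccati equation linearises under `G ↦ 1 / G`: the derivative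
of `1 / G - 1 / s` is `-(G/s)² / G² + 1 / s² = 0`, so `1 / (s g(s)) = 1 / s + C`, i.e.
`g(s) = 1 / (1 + C s)`, and `g(1) ≤ 1` forces `C ≥ 0`.
-/

theorem hasDerivAt_integral_of_continuousOn_Ici {E : Type*} [NormedAddCommGroup E]
    [NormedSpace ℝ E] [CompleteSpace E] {f : ℝ → E} {a s : ℝ} (hf : ContinuousOn f (Ici a))
    (hs : a < s) : HasDerivAt (fun u => ∫ t in a..u, f t) (f s) s :=
  intervalIntegral.integral_hasDerivAt_right
    ((hf.mono Icc_subset_Ici_self).intervalIntegrable_of_Icc hs.le)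
    ((hf.mono Ioi_subset_Ici_self).stronglyMeasurableAtFilter isOpen_Ioi s hs)
    (hf.continuousAt (Ici_mem_nhds hs))

theorem inv_sub_inv_eq_of_hasDerivAt_div_sq {G : ℝ → ℝ}
    (hG : ∀ s, 0 < s → HasDerivAt G ((G s / s) ^ 2) s) (hG0 : ∀ s, 0 < s → G s ≠ 0)
    {s t : ℝ} (hs : 0 < s) (ht : 0 < t) : (G s)⁻¹ - s⁻¹ = (G t)⁻¹ - t⁻¹ := by
  have hderiv : ∀ u, 0 < u → HasDerivAt (fun u => (G u)⁻¹ - u⁻¹) 0 u := by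
    intro u hu
    refine (((hG u hu).inv (hG0 u hu)).sub (hasDerivAt_inv hu.ne')).congr_deriv ?_
    field_simp [hG0 u hu, hu.ne']
    ring
  exact isOpen_Ioi.is_const_of_deriv_eq_zero isPreconnected_Ioi
    (fun u hu => (hderiv u hu).differentiableAt.differentiableWithinAt)
    (fun u hu => (hderiv u hu).deriv) hs ht

/-- Solutions of g(s) = (1/s)∫_0^s g², with g continuous, g(0)=1, 0 ≤ g ≤ 1,
are g(s) = 1/(1+Cs). -/
theorem sqrt_laplace_solution (g : ℝ → ℝ)
    (hg : ContinuousOn g (Set.Ici 0)) (hg0 : g 0 = 1)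
    (hbd : ∀ s, 0 ≤ s → 0 ≤ g s ∧ g s ≤ 1)
    (heq : ∀ s : ℝ, 0 < s → s * g s = ∫ t in (0:ℝ)..s, (g t) ^ 2) :
    ∃ C : ℝ, 0 ≤ C ∧ ∀ s, 0 ≤ s → g s = 1 / (1 + C * s) := by
  set G : ℝ → ℝ := fun s => ∫ t in (0:ℝ)..s, (g t) ^ 2
  have hG_eq : ∀ s, 0 < s → G s = s * g s := fun s hs => (heq s hs).symm
  have hG_pos : ∀ s, 0 < s → 0 < G s := fun s hs =>
    intervalIntegral.integral_pos hs ((hg.mono Icc_subset_Ici_self).pow 2)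
      (fun _ _ => sq_nonneg _) ⟨0, left_mem_Icc.2 hs.le, by simp [hg0]⟩
  have hG_deriv : ∀ s, 0 < s → HasDerivAt G ((G s / s) ^ 2) s := fun s hs => by
    rw [hG_eq s hs, mul_div_cancel_left₀ _ hs.ne']
    exact hasDerivAt_integral_of_continuousOn_Ici (hg.pow 2) hs
  have hg_pos : ∀ s, 0 < s → 0 < g s := fun s hs =>
    pos_of_mul_pos_right (hG_eq s hs ▸ hG_pos s hs) hs.le
  refine ⟨(g 1)⁻¹ - 1, sub_nonneg.2 ((one_le_inv₀ (hg_pos 1 one_pos)).2 (hbd 1 zero_le_one).2),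
    fun s hs => ?_⟩
  rcases hs.eq_or_lt with rfl | hs
  · simp [hg0]
  have hconst := inv_sub_inv_eq_of_hasDerivAt_div_sq hG_deriv (fun s hs => (hG_pos s hs).ne')
    hs one_pos
  rw [hG_eq s hs, hG_eq 1 one_pos, one_mul, inv_one] at hconst
  refine eq_one_div_of_mul_eq_one_right ?_
  field_simp [(hg_pos s hs).ne'] at hconst
  linear_combination -hconst
end

section
/- For 1 < α < 2 and probability densities p, q on [0,∞) with the same mean w and finite α-th moments, d_α(T[p], T[q]) ≤ (2/(α+1)) d_α(p, q); in particular T is a contraction in the metric d_α since 2/(α+1) < 1. -/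
open MeasureTheory Real Set

/-- S[p](x) = ∫_x^∞ p(u)/u du. -/
noncomputable def S (p : ℝ → ℝ) (x : ℝ) : ℝ := ∫ u in Set.Ioi x, p u / u

/-- T[p] = S[p] * S[p] (convolution on [0,∞)). -/
noncomputable def T (p : ℝ → ℝ) (x : ℝ) : ℝ := ∫ v in (0:ℝ)..x, S p (x - v) * S p v

/-- Laplace transform of a density on [0,∞). -/
noncomputable def L (p : ℝ → ℝ) (s : ℝ) : ℝ := ∫ x in Set.Ioi (0:ℝ), Real.exp (-s * x) * p x

/-- The metric d_α(p,q) = sup_{s>0} |L[p](s) - L[q](s)|/s^α (valued in ℝ≥0∞). -/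
noncomputable def dAlpha (α : ℝ) (p q : ℝ → ℝ) : ENNReal :=
  ⨆ s ∈ Set.Ioi (0:ℝ), ENNReal.ofReal (|L p s - L q s| / s ^ α)

open scoped ENNReal

/-!
By Tonelli, the Laplace transform of the tail integral `S[p]` is an average of `L[p]`:
`∫₀^∞ e^{-sy} ∫_y^∞ p(u)/u du dy = (1/s) ∫₀^∞ p(u) (1 - e^{-su})/u du = (1/s) ∫₀^s L[p]`.
As `T[p] = S[p] * S[p]` is a convolution on `[0, ∞)`, `L[T[p]](s)` is the square of this average
`A_p(s) ∈ [0, 1]`, whence `|L[T[p]](s) - L[T[q]](s)| ≤ 2 |A_p(s) - A_q(s)|`, and averaging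
`|L[p](t) - L[q](t)| ≤ d_α(p, q) t^α` over `[0, s]` gives
`|A_p(s) - A_q(s)| ≤ d_α(p, q) s^α / (α + 1)`.
-/

theorem lintegral_lintegral_sub_mul {G : Type*} [MeasurableSpace G] [AddGroup G]
    [MeasurableAdd₂ G] [MeasurableNeg G] {μ : Measure G} [SFinite μ] [μ.IsAddRightInvariant]
    {f g : G → ℝ≥0∞} (hf : Measurable f) (hg : Measurable g) :
    ∫⁻ x, ∫⁻ v, f (x - v) * g v ∂μ ∂μ = (∫⁻ x, f x ∂μ) * ∫⁻ v, g v ∂μ :=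
  calc ∫⁻ x, ∫⁻ v, f (x - v) * g v ∂μ ∂μ = ∫⁻ v, ∫⁻ x, f (x - v) * g v ∂μ ∂μ :=
        lintegral_lintegral_swap
          ((hf.comp measurable_sub).mul (hg.comp measurable_snd)).aemeasurable
    _ = ∫⁻ v, (∫⁻ x, f x ∂μ) * g v ∂μ := by
        refine lintegral_congr fun v => ?_
        rw [← lintegral_sub_right_eq_self f v]
        exact lintegral_mul_const _ (hf.comp (measurable_sub_const v))
    _ = (∫⁻ x, f x ∂μ) * ∫⁻ v, g v ∂μ := lintegral_const_mul _ hg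

theorem lintegral_Ioi_lintegral_Ioi_swap {a : ℝ} {k : ℝ → ℝ → ℝ≥0∞}
    (hk : Measurable (Function.uncurry k)) :
    ∫⁻ y in Ioi a, ∫⁻ u in Ioi y, k y u = ∫⁻ u in Ioi a, ∫⁻ y in Ioo a u, k y u := by
  have hk' : Measurable ({z : ℝ × ℝ | z.1 < z.2}.indicator (Function.uncurry k)) :=
    hk.indicator (measurableSet_lt measurable_fst measurable_snd)
  calc ∫⁻ y in Ioi a, ∫⁻ u in Ioi y, k y u
      = ∫⁻ y in Ioi a, ∫⁻ u, {z : ℝ × ℝ | z.1 < z.2}.indicator (Function.uncurry k) (y, u) := by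
        refine lintegral_congr fun y => ?_
        rw [← lintegral_indicator measurableSet_Ioi]
        rfl
    _ = ∫⁻ u, ∫⁻ y in Ioi a, {z : ℝ × ℝ | z.1 < z.2}.indicator (Function.uncurry k) (y, u) :=
        lintegral_lintegral_swap hk'.aemeasurable
    _ = ∫⁻ u, ∫⁻ y in Ioo a u, k y u := by
        refine lintegral_congr fun u => ?_
        rw [← Iio_inter_Ioi, ← setLIntegral_indicator measurableSet_Iio]
        rfl
    _ = ∫⁻ u in Ioi a, ∫⁻ y in Ioo a u, k y u := by
        refine (setLIntegral_eq_of_support_subset fun u hu => ?_).symm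
        by_contra hua
        rw [Function.mem_support, Ioo_eq_empty (by simpa using hua), Measure.restrict_empty,
          lintegral_zero_measure] at hu
        exact hu rfl

theorem lintegral_Ioo_exp_neg_mul {r c : ℝ} (hr : 0 < r) (hc : 0 ≤ c) :
    ∫⁻ x in Ioo 0 c, ENNReal.ofReal (exp (-r * x)) = ENNReal.ofReal ((1 - exp (-r * c)) / r) := by
  have hcont : Continuous fun x => exp (-r * x) := by fun_prop
  have hderiv (x : ℝ) : HasDerivAt (fun x => exp (-r * x) / -r) (exp (-r * x)) x := by
    have h := ((hasDerivAt_id x).const_mul (-r)).exp.div_const (-r)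
    simp only [id, mul_one] at h
    rwa [mul_div_cancel_right₀ _ (neg_ne_zero.2 hr.ne')] at h
  rw [← ofReal_integral_eq_lintegral_ofReal (hcont.integrableOn_Icc.mono_set Ioo_subset_Icc_self)
      (Filter.Eventually.of_forall fun x => (exp_pos _).le),
    ← integral_Ioc_eq_integral_Ioo, ← intervalIntegral.integral_of_le hc,
    intervalIntegral.integral_eq_sub_of_hasDerivAt (fun x _ => hderiv x)
      (hcont.intervalIntegrable 0 c)]
  congr 1
  simp only [mul_zero, exp_zero]
  ring

theorem one_sub_exp_neg_mul_div_nonneg {r c : ℝ} (hr : 0 < r) (hc : 0 ≤ c) :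
    0 ≤ (1 - exp (-r * c)) / r :=
  div_nonneg (sub_nonneg.2 (exp_le_one_iff.2 (by nlinarith))) hr.le

theorem measurable_S {p : ℝ → ℝ} (hp : Measurable p) : Measurable (S p) := by
  have hS : S p = fun x =>
      ∫ u, {z : ℝ × ℝ | z.1 < z.2}.indicator (fun z => p z.2 / z.2) (x, u) := by
    ext x
    rw [S, ← integral_indicator measurableSet_Ioi]
    rfl
  rw [hS]
  exact (((hp.comp measurable_snd).div measurable_snd).indicator (measurableSet_lt
    measurable_fst measurable_snd)).stronglyMeasurable.integral_prod_right'.measurable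

theorem measurable_L {p : ℝ → ℝ} (hp : Measurable p) : Measurable (L p) :=
  ((measurable_fst.neg.mul measurable_snd).exp.mul
    (hp.comp measurable_snd)).stronglyMeasurable.integral_prod_right'.measurable

noncomputable def laplaceIntegrand (f : ℝ → ℝ) (s : ℝ) : ℝ → ℝ≥0∞ :=
  (Ioi 0).indicator fun x => ENNReal.ofReal (exp (-s * x) * f x)

section LaplaceIntegrand

variable {f g : ℝ → ℝ} {s : ℝ}

theorem measurable_laplaceIntegrand (hf : Measurable f) : Measurable (laplaceIntegrand f s) := by
  unfold laplaceIntegrand; fun_prop (disch := exact measurableSet_Ioi)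

theorem lintegral_laplaceIntegrand :
    ∫⁻ x, laplaceIntegrand f s x = ∫⁻ x in Ioi 0, ENNReal.ofReal (exp (-s * x) * f x) :=
  lintegral_indicator measurableSet_Ioi _

theorem L_eq_toReal_lintegral (hf : Measurable f) (hf0 : ∀ x, 0 < x → 0 ≤ f x) :
    L f s = (∫⁻ x, laplaceIntegrand f s x).toReal := by
  rw [lintegral_laplaceIntegrand]
  refine integral_eq_lintegral_of_nonneg_ae ?_ (by fun_prop)
  filter_upwards [ae_restrict_mem measurableSet_Ioi] with x hx
  exact mul_nonneg (exp_pos _).le (hf0 x hx)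

theorem lintegral_laplaceIntegrand_sub_mul (hf0 : ∀ x, 0 < x → 0 ≤ f x) (x : ℝ) :
    ∫⁻ v, laplaceIntegrand f s (x - v) * laplaceIntegrand g s v =
      ∫⁻ v in Ioo 0 x, ENNReal.ofReal (exp (-s * x) * (f (x - v) * g v)) := by
  rw [← lintegral_indicator measurableSet_Ioo]
  refine lintegral_congr fun v => ?_
  simp only [laplaceIntegrand]
  by_cases hv : v ∈ Ioo 0 x
  · have hxv : x - v ∈ Ioi 0 := sub_pos.2 hv.2
    rw [indicator_of_mem hv, indicator_of_mem hxv, indicator_of_mem (show v ∈ Ioi 0 from hv.1),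
      ← ENNReal.ofReal_mul (mul_nonneg (exp_pos _).le (hf0 _ hxv))]
    congr 1
    rw [show -s * x = -s * (x - v) + -s * v by ring, exp_add]
    ring
  · rw [indicator_of_notMem hv]
    rcases not_and_or.1 hv with hv | hv
    · rw [indicator_of_notMem (show v ∉ Ioi 0 from hv), mul_zero]
    · rw [indicator_of_notMem (show x - v ∉ Ioi 0 by simpa using hv), zero_mul]

theorem L_convolution (hf : Measurable f) (hg : Measurable g)
    (hf0 : ∀ x, 0 < x → 0 ≤ f x) (hg0 : ∀ x, 0 < x → 0 ≤ g x)
    (hfs : IntegrableOn (fun x => exp (-s * x) * f x) (Ioi 0))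
    (hgs : IntegrableOn (fun x => exp (-s * x) * g x) (Ioi 0)) :
    L (fun x => ∫ v in (0:ℝ)..x, f (x - v) * g v) s = L f s * L g s := by
  set F := laplaceIntegrand f s
  set G := laplaceIntegrand g s
  have hF : Measurable F := measurable_laplaceIntegrand hf
  have hG : Measurable G := measurable_laplaceIntegrand hg
  -- No integrability of the inner integrand is needed: if it diverges, both sides are junk `0`.
  have hconv (x : ℝ) (hx : 0 < x) :
      exp (-s * x) * ∫ v in (0:ℝ)..x, f (x - v) * g v = (∫⁻ v, F (x - v) * G v).toReal := by
    rw [intervalIntegral.integral_of_le hx.le, integral_Ioc_eq_integral_Ioo,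
      ← integral_const_mul, integral_eq_lintegral_of_nonneg_ae _ (by fun_prop),
      lintegral_laplaceIntegrand_sub_mul hf0]
    filter_upwards [ae_restrict_mem measurableSet_Ioo] with v hv
    exact mul_nonneg (exp_pos _).le (mul_nonneg (hf0 _ (sub_pos.2 hv.2)) (hg0 _ hv.1))
  have hsupp : (Function.support fun x => ∫⁻ v, F (x - v) * G v) ⊆ Ioi 0 := by
    intro x hx
    by_contra hx0
    rw [Function.mem_support, lintegral_laplaceIntegrand_sub_mul hf0,
      Ioo_eq_empty (by simpa using hx0), Measure.restrict_empty, lintegral_zero_measure] at hx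
    exact hx rfl
  have hprod := lintegral_lintegral_sub_mul (μ := volume) hF hG
  have hmeas : Measurable fun x => ∫⁻ v, F (x - v) * G v :=
    ((hF.comp measurable_sub).mul (hG.comp measurable_snd)).lintegral_prod_right'
  calc L (fun x => ∫ v in (0:ℝ)..x, f (x - v) * g v) s
      = ∫ x in Ioi 0, (∫⁻ v, F (x - v) * G v).toReal :=
        setIntegral_congr_fun measurableSet_Ioi hconv
    _ = (∫⁻ x in Ioi 0, ∫⁻ v, F (x - v) * G v).toReal := by
        refine integral_toReal hmeas.aemeasurable (ae_restrict_of_ae (ae_lt_top hmeas ?_))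
        rw [hprod, lintegral_laplaceIntegrand, lintegral_laplaceIntegrand]
        exact (ENNReal.mul_lt_top hfs.lintegral_lt_top hgs.lintegral_lt_top).ne
    _ = L f s * L g s := by
        rw [setLIntegral_eq_of_support_subset hsupp, hprod, ENNReal.toReal_mul,
          L_eq_toReal_lintegral hf hf0, L_eq_toReal_lintegral hg hg0]

end LaplaceIntegrand

section Density

variable {p : ℝ → ℝ} {s : ℝ}

theorem integrableOn_div_Ioi (hpint : IntegrableOn p (Ioi 0)) {a : ℝ} (ha : 0 < a) :
    IntegrableOn (fun u => p u / u) (Ioi a) := by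
  have hpa : IntegrableOn p (Ioi a) := hpint.mono_set (Ioi_subset_Ioi ha.le)
  refine (hpa.norm.div_const a).mono'
    (hpa.1.aemeasurable.div measurable_id.aemeasurable).aestronglyMeasurable ?_
  filter_upwards [ae_restrict_mem measurableSet_Ioi] with u hu
  rw [norm_div, Real.norm_of_nonneg (ha.trans hu).le]
  exact div_le_div_of_nonneg_left (norm_nonneg _) ha (le_of_lt hu)

theorem S_nonneg (hpnn : ∀ x, 0 ≤ p x) {x : ℝ} (hx : 0 ≤ x) : 0 ≤ S p x :=
  setIntegral_nonneg measurableSet_Ioi fun u hu => div_nonneg (hpnn u) (hx.trans (le_of_lt hu))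

theorem integrableOn_exp_neg_mul_mul (hpint : IntegrableOn p (Ioi 0)) {t : ℝ} (ht : 0 ≤ t) :
    IntegrableOn (fun x => exp (-t * x) * p x) (Ioi 0) := by
  refine hpint.norm.mono' ((Continuous.aestronglyMeasurable (by fun_prop)).mul hpint.1) ?_
  filter_upwards [ae_restrict_mem measurableSet_Ioi] with x hx
  rw [norm_mul, Real.norm_of_nonneg (exp_pos _).le]
  exact mul_le_of_le_one_left (norm_nonneg _) (exp_le_one_iff.2 (by nlinarith [mem_Ioi.1 hx]))

theorem L_nonneg (hpnn : ∀ x, 0 ≤ p x) (t : ℝ) : 0 ≤ L p t :=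
  setIntegral_nonneg measurableSet_Ioi fun x _ => mul_nonneg (exp_pos _).le (hpnn x)

theorem L_le_one (hpnn : ∀ x, 0 ≤ p x) (hpint : IntegrableOn p (Ioi 0))
    (hp1 : ∫ x in Ioi (0:ℝ), p x = 1) {t : ℝ} (ht : 0 ≤ t) : L p t ≤ 1 := by
  rw [← hp1]
  refine setIntegral_mono_on (integrableOn_exp_neg_mul_mul hpint ht) hpint measurableSet_Ioi
    fun x hx => mul_le_of_le_one_left (hpnn x) (exp_le_one_iff.2 ?_)
  nlinarith [mem_Ioi.1 hx]

theorem intervalIntegrable_L (hpm : Measurable p) (hpnn : ∀ x, 0 ≤ p x)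
    (hpint : IntegrableOn p (Ioi 0)) (hp1 : ∫ x in Ioi (0:ℝ), p x = 1) (hs : 0 ≤ s) :
    IntervalIntegrable (L p) volume 0 s := by
  refine (intervalIntegrable_iff_integrableOn_Ioc_of_le hs).2
    (Measure.integrableOn_of_bounded (by simp) (measurable_L hpm).aestronglyMeasurable (M := 1) ?_)
  filter_upwards [ae_restrict_mem measurableSet_Ioc] with t ht
  rw [Real.norm_of_nonneg (L_nonneg hpnn t)]
  exact L_le_one hpnn hpint hp1 ht.1.le

theorem ofReal_intervalIntegral_L (hpm : Measurable p) (hpnn : ∀ x, 0 ≤ p x)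
    (hpint : IntegrableOn p (Ioi 0)) (hp1 : ∫ x in Ioi (0:ℝ), p x = 1) (hs : 0 ≤ s) :
    ENNReal.ofReal (∫ t in (0:ℝ)..s, L p t) =
      ∫⁻ u in Ioi 0, ENNReal.ofReal ((1 - exp (-u * s)) / u * p u) := by
  rw [intervalIntegral.integral_of_le hs, ofReal_integral_eq_lintegral_ofReal
    (intervalIntegrable_L hpm hpnn hpint hp1 hs).1 (Filter.Eventually.of_forall (L_nonneg hpnn))]
  calc ∫⁻ t in Ioc 0 s, ENNReal.ofReal (L p t)
      = ∫⁻ t in Ioc 0 s, ∫⁻ u in Ioi 0, ENNReal.ofReal (exp (-u * t)) * ENNReal.ofReal (p u) := by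
        refine setLIntegral_congr_fun measurableSet_Ioc fun t ht => ?_
        rw [L, ofReal_integral_eq_lintegral_ofReal (integrableOn_exp_neg_mul_mul hpint ht.1.le)
          (Filter.Eventually.of_forall fun x => mul_nonneg (exp_pos _).le (hpnn x))]
        refine lintegral_congr fun u => ?_
        rw [← ENNReal.ofReal_mul (exp_pos _).le]
        ring_nf
    _ = ∫⁻ u in Ioi 0, ∫⁻ t in Ioc 0 s, ENNReal.ofReal (exp (-u * t)) * ENNReal.ofReal (p u) :=
        lintegral_lintegral_swap (by fun_prop)
    _ = ∫⁻ u in Ioi 0, ENNReal.ofReal ((1 - exp (-u * s)) / u * p u) := by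
        refine setLIntegral_congr_fun measurableSet_Ioi fun u hu => ?_
        rw [lintegral_mul_const' _ _ ENNReal.ofReal_ne_top,
          ← Measure.restrict_congr_set Ioo_ae_eq_Ioc, lintegral_Ioo_exp_neg_mul hu hs,
          ← ENNReal.ofReal_mul (one_sub_exp_neg_mul_div_nonneg hu hs)]

theorem lintegral_laplaceIntegrand_S (hpm : Measurable p) (hpnn : ∀ x, 0 ≤ p x)
    (hpint : IntegrableOn p (Ioi 0)) (hp1 : ∫ x in Ioi (0:ℝ), p x = 1) (hs : 0 < s) :
    ∫⁻ y, laplaceIntegrand (S p) s y = ENNReal.ofReal ((∫ t in (0:ℝ)..s, L p t) / s) := by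
  rw [lintegral_laplaceIntegrand]
  calc ∫⁻ y in Ioi 0, ENNReal.ofReal (exp (-s * y) * S p y)
      = ∫⁻ y in Ioi 0, ∫⁻ u in Ioi y,
          ENNReal.ofReal (exp (-s * y)) * ENNReal.ofReal (p u / u) := by
        refine setLIntegral_congr_fun measurableSet_Ioi fun y hy => ?_
        rw [ENNReal.ofReal_mul (exp_pos _).le, S, ofReal_integral_eq_lintegral_ofReal
          (integrableOn_div_Ioi hpint hy) ?_, lintegral_const_mul' _ _ ENNReal.ofReal_ne_top]
        filter_upwards [ae_restrict_mem measurableSet_Ioi] with u hu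
        exact div_nonneg (hpnn u) (lt_trans hy hu).le
    _ = ∫⁻ u in Ioi 0, ∫⁻ y in Ioo 0 u,
          ENNReal.ofReal (exp (-s * y)) * ENNReal.ofReal (p u / u) :=
        lintegral_Ioi_lintegral_Ioi_swap (by fun_prop)
    _ = ∫⁻ u in Ioi 0, ENNReal.ofReal ((1 - exp (-u * s)) / u * p u) * ENNReal.ofReal s⁻¹ := by
        refine setLIntegral_congr_fun measurableSet_Ioi fun u hu => ?_
        rw [lintegral_mul_const' _ _ ENNReal.ofReal_ne_top,
          lintegral_Ioo_exp_neg_mul hs (le_of_lt hu),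
          ← ENNReal.ofReal_mul (one_sub_exp_neg_mul_div_nonneg hs (le_of_lt hu)),
          ← ENNReal.ofReal_mul (mul_nonneg (one_sub_exp_neg_mul_div_nonneg hu hs.le) (hpnn u))]
        congr 1
        rw [neg_mul, neg_mul, mul_comm u s]
        ring
    _ = ENNReal.ofReal ((∫ t in (0:ℝ)..s, L p t) / s) := by
        rw [lintegral_mul_const' _ _ ENNReal.ofReal_ne_top,
          ← ofReal_intervalIntegral_L hpm hpnn hpint hp1 hs.le, ← ENNReal.ofReal_mul
            (intervalIntegral.integral_nonneg hs.le fun t _ => L_nonneg hpnn t), div_eq_mul_inv]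

theorem integrableOn_exp_neg_mul_S (hpm : Measurable p) (hpnn : ∀ x, 0 ≤ p x)
    (hpint : IntegrableOn p (Ioi 0)) (hp1 : ∫ x in Ioi (0:ℝ), p x = 1) (hs : 0 < s) :
    IntegrableOn (fun y => exp (-s * y) * S p y) (Ioi 0) := by
  have hS := measurable_S hpm
  refine ⟨(by fun_prop : Measurable fun y => exp (-s * y) * S p y).aestronglyMeasurable,
    (hasFiniteIntegral_iff_ofReal ?_).2 ?_⟩
  · filter_upwards [ae_restrict_mem measurableSet_Ioi] with y hy
    exact mul_nonneg (exp_pos _).le (S_nonneg hpnn (le_of_lt hy))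
  · rw [← lintegral_laplaceIntegrand, lintegral_laplaceIntegrand_S hpm hpnn hpint hp1 hs]
    exact ENNReal.ofReal_lt_top

theorem L_S (hpm : Measurable p) (hpnn : ∀ x, 0 ≤ p x)
    (hpint : IntegrableOn p (Ioi 0)) (hp1 : ∫ x in Ioi (0:ℝ), p x = 1) (hs : 0 < s) :
    L (S p) s = (∫ t in (0:ℝ)..s, L p t) / s := by
  rw [L_eq_toReal_lintegral (measurable_S hpm) fun x hx => S_nonneg hpnn hx.le,
    lintegral_laplaceIntegrand_S hpm hpnn hpint hp1 hs, ENNReal.toReal_ofReal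
      (div_nonneg (intervalIntegral.integral_nonneg hs.le fun t _ => L_nonneg hpnn t) hs.le)]

theorem L_T (hpm : Measurable p) (hpnn : ∀ x, 0 ≤ p x)
    (hpint : IntegrableOn p (Ioi 0)) (hp1 : ∫ x in Ioi (0:ℝ), p x = 1) (hs : 0 < s) :
    L (T p) s = ((∫ t in (0:ℝ)..s, L p t) / s) ^ 2 := by
  have hS := integrableOn_exp_neg_mul_S hpm hpnn hpint hp1 hs
  have hS0 (x : ℝ) (hx : 0 < x) : 0 ≤ S p x := S_nonneg hpnn hx.le
  rw [← L_S hpm hpnn hpint hp1 hs, sq]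
  exact L_convolution (measurable_S hpm) (measurable_S hpm) hS0 hS0 hS hS

theorem average_L_mem_Icc (hpm : Measurable p) (hpnn : ∀ x, 0 ≤ p x)
    (hpint : IntegrableOn p (Ioi 0)) (hp1 : ∫ x in Ioi (0:ℝ), p x = 1) (hs : 0 < s) :
    (∫ t in (0:ℝ)..s, L p t) / s ∈ Icc 0 1 := by
  refine ⟨div_nonneg (intervalIntegral.integral_nonneg hs.le fun t _ => L_nonneg hpnn t) hs.le,
    (div_le_one hs).2 ?_⟩
  calc ∫ t in (0:ℝ)..s, L p t ≤ ∫ _ in (0:ℝ)..s, (1:ℝ) :=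
        intervalIntegral.integral_mono_on hs.le (intervalIntegrable_L hpm hpnn hpint hp1 hs.le)
          intervalIntegrable_const fun t ht => L_le_one hpnn hpint hp1 ht.1
    _ = s := by simp

end Density

theorem dAlpha_le_ofReal_iff {α C : ℝ} (hC : 0 ≤ C) {p q : ℝ → ℝ} :
    dAlpha α p q ≤ ENNReal.ofReal C ↔ ∀ s, 0 < s → |L p s - L q s| ≤ C * s ^ α := by
  simp only [dAlpha, iSup₂_le_iff, mem_Ioi, ENNReal.ofReal_le_ofReal_iff hC]
  exact forall₂_congr fun s hs => div_le_iff₀ (rpow_pos_of_pos hs α)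

theorem abs_average_sub_le_of_abs_sub_le_rpow {f g : ℝ → ℝ} {α C s : ℝ} (hα : -1 < α)
    (hs : 0 < s) (hf : IntervalIntegrable f volume 0 s) (hg : IntervalIntegrable g volume 0 s)
    (hfg : ∀ t, 0 < t → |f t - g t| ≤ C * t ^ α) :
    |(∫ t in (0:ℝ)..s, f t) / s - (∫ t in (0:ℝ)..s, g t) / s| ≤ C * s ^ α / (α + 1) := by
  have hbound : ‖∫ t in (0:ℝ)..s, f t - g t‖ ≤ ∫ t in (0:ℝ)..s, C * t ^ α :=
    intervalIntegral.norm_integral_le_of_norm_le hs.le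
      (Filter.Eventually.of_forall fun t ht => (Real.norm_eq_abs _).trans_le (hfg t ht.1))
      ((intervalIntegral.intervalIntegrable_rpow' hα).const_mul C)
  rw [Real.norm_eq_abs, intervalIntegral.integral_sub hf hg, intervalIntegral.integral_const_mul,
    integral_rpow (Or.inl hα), zero_rpow (by linarith), sub_zero, rpow_add_one hs.ne'] at hbound
  rw [← sub_div, abs_div, abs_of_pos hs, div_le_iff₀ hs]
  calc _ ≤ _ := hbound
    _ = C * s ^ α / (α + 1) * s := by ring

theorem abs_sq_sub_sq_le_two_mul {a b : ℝ} (ha : a ∈ Icc (0:ℝ) 1) (hb : b ∈ Icc (0:ℝ) 1) :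
    |a ^ 2 - b ^ 2| ≤ 2 * |a - b| := by
  rw [sq_sub_sq, abs_mul]
  gcongr
  exact abs_le.2 ⟨by linarith [ha.1, hb.1], by linarith [ha.2, hb.2]⟩

theorem T_contraction_general (p q : ℝ → ℝ) (α : ℝ) (hα1 : 1 < α)
    (hpm : Measurable p) (hqm : Measurable q)
    (hpnn : ∀ x, 0 ≤ p x) (hqnn : ∀ x, 0 ≤ q x)
    (hpint : IntegrableOn p (Set.Ioi 0)) (hqint : IntegrableOn q (Set.Ioi 0))
    (hp1 : ∫ x in Set.Ioi (0:ℝ), p x = 1) (hq1 : ∫ x in Set.Ioi (0:ℝ), q x = 1) :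
    dAlpha α (T p) (T q) ≤ ENNReal.ofReal (2 / (α + 1)) * dAlpha α p q
      ∧ 2 / (α + 1) < 1 := by
  refine ⟨?_, (div_lt_one (by linarith)).2 (by linarith)⟩
  obtain hD | hD := eq_top_or_lt_top (dAlpha α p q)
  · rw [hD, ENNReal.mul_top (by simpa using (by positivity : 0 < 2 / (α + 1)))]
    exact le_top
  set D := (dAlpha α p q).toReal
  have hD0 : 0 ≤ D := ENNReal.toReal_nonneg
  have hDeq : dAlpha α p q = ENNReal.ofReal D := (ENNReal.ofReal_toReal hD.ne).symm
  have hpq := (dAlpha_le_ofReal_iff hD0).1 hDeq.le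
  rw [hDeq, ← ENNReal.ofReal_mul (by positivity), dAlpha_le_ofReal_iff (by positivity)]
  intro s hs
  rw [L_T hpm hpnn hpint hp1 hs, L_T hqm hqnn hqint hq1 hs]
  calc _ ≤ 2 * |(∫ t in (0:ℝ)..s, L p t) / s - (∫ t in (0:ℝ)..s, L q t) / s| :=
        abs_sq_sub_sq_le_two_mul (average_L_mem_Icc hpm hpnn hpint hp1 hs)
          (average_L_mem_Icc hqm hqnn hqint hq1 hs)
    _ ≤ 2 * (D * s ^ α / (α + 1)) := by
        gcongr
        exact abs_average_sub_le_of_abs_sub_le_rpow (by linarith) hs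
          (intervalIntegrable_L hpm hpnn hpint hp1 hs.le)
          (intervalIntegrable_L hqm hqnn hqint hq1 hs.le) hpq
    _ = 2 / (α + 1) * D * s ^ α := by ring

/-- T is a contraction with factor 2/(α+1) < 1 in the metric d_α. -/
theorem T_contraction (p q : ℝ → ℝ) (α w : ℝ) (hα1 : 1 < α) (hα2 : α < 2)
    (hpm : Measurable p) (hqm : Measurable q)
    (hpnn : ∀ x, 0 ≤ p x) (hqnn : ∀ x, 0 ≤ q x)
    (hpint : IntegrableOn p (Set.Ioi 0)) (hqint : IntegrableOn q (Set.Ioi 0))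
    (hp1 : ∫ x in Set.Ioi (0:ℝ), p x = 1) (hq1 : ∫ x in Set.Ioi (0:ℝ), q x = 1)
    (hpw : ∫ x in Set.Ioi (0:ℝ), x * p x = w)
    (hqw : ∫ x in Set.Ioi (0:ℝ), x * q x = w)
    (hpM : IntegrableOn (fun x => x ^ α * p x) (Set.Ioi 0))
    (hqM : IntegrableOn (fun x => x ^ α * q x) (Set.Ioi 0)) :
    dAlpha α (T p) (T q) ≤ ENNReal.ofReal (2 / (α + 1)) * dAlpha α p q
      ∧ 2 / (α + 1) < 1 :=
  T_contraction_general p q α hα1 hpm hqm hpnn hqnn hpint hqint hp1 hq1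
end
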